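/- Let Δ₃ ⊂ ℝ² be the triangle with vertices (0,0), (9,3√3), (0,6√3), and μ the measure with density x⁴(−x/2+√3y/2)⁴(x/2+√3y/2)⁴ on Δ₃. Then the barycenter of Δ₃ with respect to μ equals (21/5, 21√3/5). -/

import Mathlib

open MeasureTheory Real

noncomputable def dens (p : ℝ × ℝ) : ℝ :=
  (p.1 * (-p.1 / 2 + Real.sqrt 3 * p.2 / 2) * (p.1 / 2 + Real.sqrt 3 * p.2 / 2)) ^ 4

/-! In the coordinates `(b, a)` with `x = b - a` and `√3 y = a + b`, the three linear factors of
the density become `b - a`, `a` and `b`, and the triangle becomes `0 ≤ a ≤ b ≤ 9`. Barycenters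
transform linearly under a linear change of variables (the Jacobian cancels in the quotient), so
it suffices to find the barycenter of this triangle for the weight `(b a (b - a))⁴`. By scaling,
the integral of the weight over the slice `a ∈ [0, b]` is `C b¹³` with `C > 0`, and by the
symmetry `a ↦ b - a` the mean of `a` on that slice is `b / 2`. Hence the barycenter is
`(14 · 9 / 15, 7 · 9 / 15)`, which maps to `(21 / 5, 21 √3 / 5)`. -/

open Set

section Barycenter

variable {E : Type*} [NormedAddCommGroup E] [NormedSpace ℝ E] [MeasurableSpace E]

noncomputable def barycenter (μ : Measure E) (s : Set E) (w : E → ℝ) : E :=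
  (∫ p in s, w p ∂μ)⁻¹ • ∫ p in s, w p • p ∂μ

theorem barycenter_image [FiniteDimensional ℝ E] [BorelSpace E] (μ : Measure E)
    [μ.IsAddHaarMeasure] (L : E ≃L[ℝ] E) {s : Set E} (hs : MeasurableSet s) (w : E → ℝ) :
    barycenter μ (L '' s) w = L (barycenter μ s (w ∘ L)) := by
  have hdet : |(L : E →L[ℝ] E).det| ≠ 0 := abs_ne_zero.2 L.toLinearEquiv.isUnit_det'.ne_zero
  have hL : ∀ x ∈ s, HasFDerivWithinAt L (L : E →L[ℝ] E) s x :=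
    fun x _ => L.hasFDerivAt.hasFDerivWithinAt
  simp only [barycenter, integral_image_eq_integral_abs_det_fderiv_smul μ hs hL L.injective.injOn,
    integral_smul, ← L.map_smul, L.integral_comp_comm, Function.comp_apply]
  rw [smul_eq_mul, mul_inv_rev, mul_smul, inv_smul_smul₀ hdet]

end Barycenter

theorem setIntegral_Icc_Icc_eq_intervalIntegral {E : Type*} [NormedAddCommGroup E]
    [NormedSpace ℝ E] [CompleteSpace E] {a b : ℝ} {g h : ℝ → ℝ} (hg : Measurable g)
    (hh : Measurable h) (hab : a ≤ b) (hgh : ∀ x ∈ Icc a b, g x ≤ h x) {f : ℝ × ℝ → E}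
    (hf : IntegrableOn f {p | p.1 ∈ Icc a b ∧ p.2 ∈ Icc (g p.1) (h p.1)}) :
    ∫ p in {p : ℝ × ℝ | p.1 ∈ Icc a b ∧ p.2 ∈ Icc (g p.1) (h p.1)}, f p =
      ∫ x in a..b, ∫ y in g x..h x, f (x, y) := by
  set R := {p : ℝ × ℝ | p.1 ∈ Icc a b ∧ p.2 ∈ Icc (g p.1) (h p.1)}
  have hR : MeasurableSet R :=
    (measurable_fst measurableSet_Icc).inter
      ((measurableSet_le (hg.comp measurable_fst) measurable_snd).inter
        (measurableSet_le measurable_snd (hh.comp measurable_fst)))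
  have slice (x : ℝ) : (fun y => R.indicator f (x, y)) =
      (Icc a b).indicator (fun x => (Icc (g x) (h x)).indicator (fun y => f (x, y))) x := by
    ext y
    by_cases hx : x ∈ Icc a b <;>
      simp only [R, indicator_apply, mem_ofPred_eq, hx, true_and, false_and, if_true, if_false,
        Pi.zero_apply]
  rw [← integral_indicator hR, Measure.volume_eq_prod,
    integral_prod _ ((integrable_indicator_iff hR).2 hf), intervalIntegral.integral_of_le hab,
    ← integral_Icc_eq_integral_Ioc, ← integral_indicator measurableSet_Icc]
  refine integral_congr_ae (Filter.Eventually.of_forall fun x => ?_)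
  simp only [slice]
  by_cases hx : x ∈ Icc a b
  · rw [indicator_of_mem hx, indicator_of_mem hx, integral_indicator measurableSet_Icc,
      integral_Icc_eq_integral_Ioc, intervalIntegral.integral_of_le (hgh x hx)]
  · simp [indicator_of_notMem hx]

theorem integral_mul_eq_midpoint_mul_integral {f : ℝ → ℝ} {a b : ℝ}
    (hf : IntervalIntegrable f volume a b) (hsymm : ∀ x, f (a + b - x) = f x) :
    ∫ x in a..b, x * f x = (a + b) / 2 * ∫ x in a..b, f x := by
  have hreflect : ∫ x in a..b, (a + b - x) * f x = ∫ x in a..b, x * f x := by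
    simpa only [hsymm, add_sub_cancel_right, add_sub_cancel_left] using
      intervalIntegral.integral_comp_sub_left (fun x => x * f x) (a + b) (a := a) (b := b)
  have hsum : (∫ x in a..b, x * f x) + ∫ x in a..b, (a + b - x) * f x =
      (a + b) * ∫ x in a..b, f x := by
    rw [← intervalIntegral.integral_add (hf.continuousOn_mul (g := fun x => x) continuousOn_id)
      (hf.continuousOn_mul (g := fun x => a + b - x) (by fun_prop)),
      ← intervalIntegral.integral_const_mul]
    congr 1 with x
    ring
  linear_combination (hsum - hreflect) / 2

theorem integral_mul_mul_sub_pow_four (b : ℝ) :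
    ∫ a in 0..b, (b * a * (b - a)) ^ 4 = (∫ t in 0..1, (t * (1 - t)) ^ 4) * b ^ 13 := by
  have hscale := intervalIntegral.smul_integral_comp_mul_left
    (fun a => (b * a * (b - a)) ^ 4) b (a := 0) (b := 1)
  rw [mul_zero, mul_one] at hscale
  rw [← hscale, smul_eq_mul]
  have hhom (t : ℝ) : (b * (b * t) * (b - b * t)) ^ 4 = b ^ 12 * (t * (1 - t)) ^ 4 := by ring
  simp only [hhom, intervalIntegral.integral_const_mul]
  ring

theorem integral_mul_one_sub_pow_four_pos : 0 < ∫ t in (0 : ℝ)..1, (t * (1 - t)) ^ 4 :=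
  intervalIntegral.intervalIntegral_pos_of_pos_on
    (Continuous.intervalIntegrable (by fun_prop) _ _)
    (fun t ht => pow_pos (mul_pos ht.1 (sub_pos.2 ht.2)) 4) one_pos

def lowerTriangle (c : ℝ) : Set (ℝ × ℝ) := {p | p.1 ∈ Icc 0 c ∧ p.2 ∈ Icc 0 p.1}

theorem convexHull_lowerTriangle {c : ℝ} (hc : 0 < c) :
    convexHull ℝ {((0 : ℝ), (0 : ℝ)), (c, 0), (c, c)} = lowerTriangle c := by
  apply Subset.antisymm
  · refine convexHull_min ?_ ?_
    · rintro p (rfl | rfl | rfl) <;> simp [lowerTriangle, hc.le]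
    · rintro ⟨b, a⟩ ⟨⟨hb0, hbc⟩, ha0, hab⟩ ⟨b', a'⟩ ⟨⟨hb0', hbc'⟩, ha0', hab'⟩ s t hs ht hst
      simp only [lowerTriangle, mem_ofPred_eq, mem_Icc, Prod.fst_add, Prod.snd_add,
        Prod.smul_fst, Prod.smul_snd, smul_eq_mul]
      refine ⟨⟨?_, ?_⟩, ?_, ?_⟩ <;> nlinarith
  · rintro ⟨b, a⟩ ⟨⟨hb0, hbc⟩, ha0, hab⟩
    have hcombo := (convex_convexHull ℝ {((0 : ℝ), (0 : ℝ)), (c, 0), (c, c)}).sum_mem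
      (t := Finset.univ) (w := ![1 - b / c, (b - a) / c, a / c])
      (z := ![((0 : ℝ), (0 : ℝ)), (c, 0), (c, c)]) ?_ ?_ ?_
    · convert hcombo using 1
      simp only [Fin.sum_univ_three, Matrix.cons_val_zero, Matrix.cons_val_one, Matrix.cons_val,
        Prod.smul_mk, smul_eq_mul, mul_zero, Prod.mk_add_mk, zero_add, add_zero,
        div_mul_cancel₀ _ hc.ne', sub_add_cancel]
    · intro i _
      fin_cases i
      · simpa using div_le_one_of_le₀ hbc hc.le
      · simpa using div_nonneg (sub_nonneg.2 hab) hc.le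
      · simpa using div_nonneg ha0 hc.le
    · simp only [Fin.sum_univ_three, Matrix.cons_val_zero, Matrix.cons_val_one, Matrix.cons_val]
      ring
    · intro i _
      fin_cases i <;> apply subset_convexHull <;> simp

theorem isCompact_lowerTriangle {c : ℝ} (hc : 0 < c) : IsCompact (lowerTriangle c) :=
  convexHull_lowerTriangle hc ▸ (toFinite _).isCompact_convexHull (𝕜 := ℝ)

theorem barycenter_lowerTriangle {c : ℝ} (hc : 0 < c) :
    barycenter volume (lowerTriangle c) (fun p => (p.1 * p.2 * (p.1 - p.2)) ^ 4) =
      (14 * c / 15, 7 * c / 15) := by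
  set W : ℝ × ℝ → ℝ := fun p => (p.1 * p.2 * (p.1 - p.2)) ^ 4
  obtain ⟨C, hC, hslice⟩ : ∃ C ≠ 0, ∀ b, ∫ a in 0..b, W (b, a) = C * b ^ 13 :=
    ⟨_, integral_mul_one_sub_pow_four_pos.ne', integral_mul_mul_sub_pow_four⟩
  have hslice_fst (b : ℝ) : ∫ a in 0..b, W (b, a) * b = C * b ^ 14 := by
    rw [intervalIntegral.integral_mul_const, hslice]
    ring
  have hslice_snd (b : ℝ) : ∫ a in 0..b, W (b, a) * a = C / 2 * b ^ 14 := by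
    simp only [mul_comm (W _)]
    rw [integral_mul_eq_midpoint_mul_integral (Continuous.intervalIntegrable (by fun_prop) _ _)
      (fun a => by simp only [W]; ring), hslice]
    ring
  have houter (K : ℝ) (n : ℕ) : ∫ b in 0..c, K * b ^ n = K * c ^ (n + 1) / (n + 1) := by
    simp only [intervalIntegral.integral_const_mul, integral_pow]
    ring
  have hint {f : ℝ × ℝ → ℝ} (hf : Continuous f) : IntegrableOn f (lowerTriangle c) :=
    hf.continuousOn.integrableOn_compact (isCompact_lowerTriangle hc)
  have fubini {f : ℝ × ℝ → ℝ} (hf : Continuous f) :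
      ∫ p in lowerTriangle c, f p = ∫ b in 0..c, ∫ a in 0..b, f (b, a) :=
    setIntegral_Icc_Icc_eq_intervalIntegral measurable_const measurable_id hc.le
      (fun _ hx => hx.1) (hint hf)
  have hmass : ∫ p in lowerTriangle c, W p = C * c ^ 14 / 14 := by
    rw [fubini (by fun_prop)]
    simp only [hslice, houter]
    ring
  have hfirst : ∫ p in lowerTriangle c, W p * p.1 = C * c ^ 15 / 15 := by
    rw [fubini (by fun_prop)]
    simp only [hslice_fst, houter]
    ring
  have hsecond : ∫ p in lowerTriangle c, W p * p.2 = C * c ^ 15 / 30 := by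
    rw [fubini (by fun_prop)]
    simp only [hslice_snd, houter]
    ring
  have hmoment : ∫ p in lowerTriangle c, W p • p =
      (∫ p in lowerTriangle c, W p * p.1, ∫ p in lowerTriangle c, W p * p.2) :=
    integral_pair (hint (by fun_prop)) (hint (by fun_prop))
  have hc0 := hc.ne'
  rw [barycenter, hmoment, hmass, hfirst, hsecond, Prod.smul_mk, smul_eq_mul, smul_eq_mul]
  ext
  · field_simp
  · field_simp
    norm_num

noncomputable def toChamber : (ℝ × ℝ) ≃L[ℝ] ℝ × ℝ :=
  LinearEquiv.toContinuousLinearEquiv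
    { toFun := fun q => (q.1 - q.2, √3 / 3 * (q.1 + q.2))
      invFun := fun p => ((p.1 + √3 * p.2) / 2, (√3 * p.2 - p.1) / 2)
      map_add' := fun q q' => by
        simp only [Prod.fst_add, Prod.snd_add, Prod.mk_add_mk, Prod.mk.injEq]
        constructor <;> ring
      map_smul' := fun r q => by
        simp only [Prod.smul_fst, Prod.smul_snd, smul_eq_mul, RingHom.id_apply, Prod.smul_mk,
          Prod.mk.injEq]
        constructor <;> ring
      left_inv := fun q => by
        have h3 : √3 * √3 = 3 := mul_self_sqrt (by norm_num)
        ext <;> linear_combination (q.1 + q.2) / 6 * h3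
      right_inv := fun p => by
        have h3 : √3 * √3 = 3 := mul_self_sqrt (by norm_num)
        ext
        · ring
        · linear_combination p.2 / 3 * h3 }

theorem toChamber_apply (q : ℝ × ℝ) : toChamber q = (q.1 - q.2, √3 / 3 * (q.1 + q.2)) := rfl

theorem dens_toChamber (q : ℝ × ℝ) : dens (toChamber q) = (q.1 * q.2 * (q.1 - q.2)) ^ 4 := by
  have h3 : √3 * √3 = 3 := mul_self_sqrt (by norm_num)
  have hsum : √3 * (√3 / 3 * (q.1 + q.2)) = q.1 + q.2 := by
    linear_combination (q.1 + q.2) / 3 * h3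
  simp only [dens, toChamber_apply, hsum]
  ring

theorem toChamber_image_lowerTriangle :
    toChamber '' lowerTriangle 9 =
      convexHull ℝ {((0 : ℝ), (0 : ℝ)), (9, 3 * √3), (0, 6 * √3)} := by
  have hvertices : toChamber '' {((0 : ℝ), (0 : ℝ)), (9, 0), (9, 9)} =
      {((0 : ℝ), (0 : ℝ)), (9, 3 * √3), (0, 6 * √3)} := by
    have h9 : √3 / 3 * 9 = 3 * √3 := by ring
    have h18 : √3 / 3 * (9 + 9) = 6 * √3 := by ring
    simp only [image_insert_eq, image_singleton, toChamber_apply, h9, h18, sub_zero, sub_self,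
      add_zero, mul_zero]
  rw [← convexHull_lowerTriangle (by norm_num), ← hvertices]
  exact (toChamber : (ℝ × ℝ) →L[ℝ] ℝ × ℝ).toLinearMap.image_convexHull _

theorem stmt :
    (∫ p in (convexHull ℝ {((0:ℝ), (0:ℝ)), (9, 3 * Real.sqrt 3), (0, 6 * Real.sqrt 3)} : Set (ℝ × ℝ)), dens p ∂volume)⁻¹ •
      (∫ p in (convexHull ℝ {((0:ℝ), (0:ℝ)), (9, 3 * Real.sqrt 3), (0, 6 * Real.sqrt 3)} : Set (ℝ × ℝ)), dens p • p ∂volume) = ((21/5 : ℝ), (21 * Real.sqrt 3 / 5 : ℝ)) := by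
  rw [← toChamber_image_lowerTriangle]
  change barycenter volume _ dens = _
  rw [barycenter_image volume toChamber (isCompact_lowerTriangle (by norm_num)).measurableSet,
    show dens ∘ toChamber = _ from funext dens_toChamber, barycenter_lowerTriangle (by norm_num),
    toChamber_apply]
  ext <;> ring
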